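/- For every positive integer β, the number of (1,β)-BM relations satisfies the recursion |R_{1,β+1}| = (2β+3)·|R_{1,β}|. -/

import Mathlib

open Set

/-- Signed letters: letter index together with a sign (`true` = positive). -/
abbrev V (n : ℕ) := Fin n × Bool

/-- Formal inversion of a signed letter. -/
def iv {n : ℕ} (x : V n) : V n := (x.1, !x.2)

/-- Oriented squares: tuples (a, b, a', b'). -/
abbrev Tup (α β : ℕ) := V α × V β × V α × V β

/-- The geometric square [aba'b'], as the set of its four representatives. -/
def square {α β : ℕ} (a : V α) (b : V β) (a' : V α) (b' : V β) : Set (Tup α β) :=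
  {(a, b, a', b'), (a', b', a, b), (iv a, iv b', iv a', iv b), (iv a', iv b, iv a, iv b')}

/-- The link of a set of geometric squares: the set of (horizontal, vertical)
edges contributed by the corners of the squares. -/
def link {α β : ℕ} (R : Set (Set (Tup α β))) : Set (V α × V β) :=
  {e | ∃ q ∈ R, ∃ t ∈ q, e = (iv t.1, t.2.1)}

/-- An (α,β)-BM relation: a set of α·β geometric squares whose link is the
complete bipartite graph K_{2α,2β}. -/
def IsBM (α β : ℕ) (R : Set (Set (Tup α β))) : Prop :=
  (∀ q ∈ R, ∃ a b a' b', q = square a b a' b') ∧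
  R.ncard = α * β ∧ link R = Set.univ

/-- Embedding of old vertical letters into the enlarged alphabet. -/
def up {β : ℕ} (b : V β) : V (β + 1) := (b.1.castSucc, b.2)

/-- The new vertical letter b_{β+1}. -/
def bn (β : ℕ) : V (β + 1) := (Fin.last β, true)

/-- Embedding of tuples along `up`. -/
def upT {α β : ℕ} (t : Tup α β) : Tup α (β + 1) :=
  (t.1, up t.2.1, t.2.2.1, up t.2.2.2)

/-- Embedding of a geometric square into the enlarged alphabet. -/
def upSq {α β : ℕ} (q : Set (Tup α β)) : Set (Tup α (β + 1)) := upT '' q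

/-- Embedding of a set of geometric squares into the enlarged alphabet. -/
def upR {α β : ℕ} (R : Set (Set (Tup α β))) : Set (Set (Tup α (β + 1))) := upSq '' R

/-- The generator a₁. -/
def a1 : V 1 := (0, true)

/-- ψ_β^{(1)}: adjoin one of the three squares involving only b_{β+1}. -/
def psi1 (β : ℕ) (R : Set (Set (Tup 1 β))) : Set (Set (Set (Tup 1 (β + 1)))) :=
  (fun s => upR R ∪ {s}) ''
    {square a1 (bn β) (iv a1) (iv (bn β)),
     square a1 (bn β) a1 (iv (bn β)),
     square a1 (bn β) (iv a1) (bn β)}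

/-- ψ_β^{(2)}: replace one square [aba'b'] of R by one of the two pairs
{[a b_{β+1} a' b'], [a b a' b_{β+1}⁻¹]} or {[a b_{β+1}⁻¹ a' b'], [a b a' b_{β+1}]}. -/
def psi2 (β : ℕ) (R : Set (Set (Tup 1 β))) : Set (Set (Set (Tup 1 (β + 1)))) :=
  {U | ∃ a b a' b', square a b a' b' ∈ R ∧
    (U = upR (R \ {square a b a' b'}) ∪
        {square a (bn β) a' (up b'), square a (up b) a' (iv (bn β))} ∨
     U = upR (R \ {square a b a' b'}) ∪
        {square a (iv (bn β)) a' (up b'), square a (up b) a' (bn β)})}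

/-- The map ψ_β. -/
def psi (β : ℕ) (R : Set (Set (Tup 1 β))) : Set (Set (Set (Tup 1 (β + 1)))) :=
  psi1 β R ∪ psi2 β R
/-! ### Auxiliary lemmas -/

section Basics

variable {n α γ : ℕ}

@[simp] lemma iv_iv (x : V n) : iv (iv x) = x := by simp [iv]

lemma iv_injective : Function.Injective (iv (n := n)) :=
  Function.LeftInverse.injective iv_iv

@[simp] lemma iv_ne (x : V n) : iv x ≠ x := by
  simp [iv, Prod.ext_iff]

lemma V1_cases (x y : V 1) : y = x ∨ y = iv x := by
  obtain ⟨i, b⟩ := y; obtain ⟨j, c⟩ := x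
  fin_cases i <;> fin_cases j <;> cases b <;> cases c <;> simp [iv]

lemma mem_square_iff {a a' : V α} {b b' : V γ} {t : Tup α γ} :
    t ∈ square a b a' b' ↔
      t = (a, b, a', b') ∨ t = (a', b', a, b) ∨
      t = (iv a, iv b', iv a', iv b) ∨ t = (iv a', iv b, iv a, iv b') := by
  simp [square]

lemma param_mem (a a' : V α) (b b' : V γ) : (a, b, a', b') ∈ square a b a' b' := by
  simp [square]

lemma square_swap (a a' : V α) (b b' : V γ) :
    square a b a' b' = square a' b' a b := by
  ext t; simp [square]; tauto

lemma square_inv (a a' : V α) (b b' : V γ) :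
    square a b a' b' = square (iv a) (iv b') (iv a') (iv b) := by
  ext t; simp [square, iv_iv]; tauto

lemma mem_of_square_eq {a a' c c' : V α} {b b' d d' : V γ}
    (h : square a b a' b' = square c d c' d') :
    (c, d, c', d') ∈ square a b a' b' := by
  rw [h]; exact param_mem _ _ _ _

/-- The link of a single square. -/
def linkSq (q : Set (Tup α γ)) : Set (V α × V γ) :=
  {e | ∃ t ∈ q, e = (iv t.1, t.2.1)}

lemma link_eq_biUnion (R : Set (Set (Tup α γ))) :
    link R = ⋃ q ∈ R, linkSq q := by
  ext e; simp [link, linkSq]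

lemma linkSq_square (a a' : V α) (b b' : V γ) :
    linkSq (square a b a' b') =
      {(iv a, b), (iv a', b'), (a, iv b'), (a', iv b)} := by
  ext e
  constructor
  · rintro ⟨t, ht, rfl⟩
    rcases mem_square_iff.mp ht with rfl | rfl | rfl | rfl <;> simp [iv_iv]
  · intro he
    rcases he with rfl | rfl | rfl | rfl
    · exact ⟨(a, b, a', b'), by simp [square], rfl⟩
    · exact ⟨(a', b', a, b), by simp [square], rfl⟩
    · exact ⟨(iv a, iv b', iv a', iv b), by simp [square], by simp [iv_iv]⟩
    · exact ⟨(iv a', iv b, iv a, iv b'), by simp [square], by simp [iv_iv]⟩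

lemma linkSq_ncard_le (a a' : V α) (b b' : V γ) :
    (linkSq (square a b a' b')).ncard ≤ 4 := by
  rw [linkSq_square]
  refine le_trans (Set.ncard_insert_le _ _) ?_
  refine Nat.succ_le_succ ?_
  refine le_trans (Set.ncard_insert_le _ _) ?_
  refine Nat.succ_le_succ ?_
  refine le_trans (Set.ncard_insert_le _ _) ?_
  simp [Set.ncard_singleton]

end Basics
section UpNew

variable {α β : ℕ}

/-- A vertical letter of the enlarged alphabet is "new" if its index is the last one. -/
def isNew {β : ℕ} (v : V (β + 1)) : Prop := v.1 = Fin.last β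

@[simp] lemma isNew_bn : isNew (bn β) := rfl

@[simp] lemma isNew_iv {v : V (β + 1)} : isNew (iv v) ↔ isNew v := Iff.rfl

@[simp] lemma not_isNew_up (b : V β) : ¬ isNew (up b) :=
  (Fin.castSucc_lt_last b.1).ne

lemma eq_up_of_not_isNew {v : V (β + 1)} (h : ¬ isNew v) : ∃ b, v = up b := by
  obtain ⟨j, hj⟩ := Fin.exists_castSucc_eq.mpr h
  refine ⟨(j, v.2), ?_⟩
  simp only [up]
  rw [hj]

lemma isNew_cases {v : V (β + 1)} (h : isNew v) : v = bn β ∨ v = iv (bn β) := by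
  obtain ⟨i, s⟩ := v
  rcases s <;> [right; left] <;>
    simpa [bn, iv, Prod.ext_iff, isNew] using h

lemma up_injective : Function.Injective (up (β := β)) := by
  rintro ⟨i, s⟩ ⟨j, t⟩ h
  simpa [up, Prod.ext_iff, Fin.castSucc_inj] using h

@[simp] lemma iv_up (b : V β) : iv (up b) = up (iv b) := rfl

@[simp] lemma up_ne_bn (b : V β) : up b ≠ bn β := by
  intro h; exact not_isNew_up b (h ▸ isNew_bn)

@[simp] lemma up_ne_ivbn (b : V β) : up b ≠ iv (bn β) := by
  intro h; exact not_isNew_up b (by rw [h]; exact isNew_bn)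

@[simp] lemma bn_ne_up (b : V β) : bn β ≠ up b := (up_ne_bn b).symm

@[simp] lemma ivbn_ne_up (b : V β) : iv (bn β) ≠ up b := (up_ne_ivbn b).symm

@[simp] lemma bn_ne_ivbn : bn β ≠ iv (bn β) := by simp [bn, iv, Prod.ext_iff]

@[simp] lemma ivbn_ne_bn : iv (bn β) ≠ bn β := bn_ne_ivbn.symm

lemma upT_injective : Function.Injective (upT (α := α) (β := β)) := by
  rintro ⟨x, b, x', b'⟩ ⟨y, c, y', c'⟩ h
  simp only [upT, Prod.mk.injEq] at h
  exact Prod.ext h.1 (Prod.ext (up_injective h.2.1) (Prod.ext h.2.2.1 (up_injective h.2.2.2)))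

lemma upSq_injective : Function.Injective (upSq (α := α) (β := β)) :=
  fun _ _ h => (Set.image_eq_image upT_injective).mp h

lemma upR_injective : Function.Injective (upR (α := α) (β := β)) :=
  fun _ _ h => (Set.image_eq_image upSq_injective).mp h

lemma upSq_square (a a' : V α) (b b' : V β) :
    upSq (square a b a' b') = square a (up b) a' (up b') := by
  ext t
  constructor
  · rintro ⟨s, hs, rfl⟩
    rcases mem_square_iff.mp hs with rfl | rfl | rfl | rfl <;>
      simp [upT, mem_square_iff, iv_up]
  · intro ht
    rcases mem_square_iff.mp ht with rfl | rfl | rfl | rfl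
    · exact ⟨(a, b, a', b'), param_mem _ _ _ _, rfl⟩
    · exact ⟨(a', b', a, b), by simp [square], rfl⟩
    · exact ⟨(iv a, iv b', iv a', iv b), by simp [square], by simp [upT]⟩
    · exact ⟨(iv a', iv b, iv a, iv b'), by simp [square], by simp [upT]⟩

lemma linkSq_upSq (q : Set (Tup α β)) :
    linkSq (upSq q) = (fun e : V α × V β => (e.1, up e.2)) '' linkSq q := by
  ext e
  constructor
  · rintro ⟨t, ⟨s, hs, rfl⟩, rfl⟩
    exact ⟨(iv s.1, s.2.1), ⟨s, hs, rfl⟩, rfl⟩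
  · rintro ⟨e₀, ⟨s, hs, rfl⟩, rfl⟩
    exact ⟨upT s, ⟨s, hs, rfl⟩, rfl⟩

/-- A square of the enlarged alphabet "has a new letter". -/
def hasNew (q : Set (Tup α (β + 1))) : Prop := ∃ t ∈ q, isNew t.2.1

lemma not_hasNew_upSq (r : Set (Tup α β)) : ¬ hasNew (upSq r) := by
  rintro ⟨t, ⟨s, _, rfl⟩, hnew⟩
  exact not_isNew_up s.2.1 hnew

/-- Recovering the "old" part of an enlarged relation. -/
def oldR (U : Set (Set (Tup α (β + 1)))) : Set (Set (Tup α β)) :=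
  {r | upSq r ∈ U}

lemma oldR_spec (T : Set (Set (Tup α β))) (P : Set (Set (Tup α (β + 1))))
    (hP : ∀ q ∈ P, hasNew q) : oldR (upR T ∪ P) = T := by
  ext r
  constructor
  · rintro (⟨r', hr', hrr⟩ | hrP)
    · rwa [← upSq_injective hrr]
    · exact absurd (hP _ hrP) (not_hasNew_upSq r)
  · intro hr; exact Or.inl ⟨r, hr, rfl⟩

end UpNew
section Counting

/-- Generic crux: if finitely many sets of size ≤ k cover a universe of size
exactly `k * |S|`, then each has size exactly `k` and they are pairwise disjoint. -/
lemma crux {I X : Type*} [Finite I] [Finite X] (S : Set I) (f : I → Set X) (k : ℕ)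
    (cover : ⋃ i ∈ S, f i = Set.univ)
    (hcard : Nat.card X = k * S.ncard)
    (hb : ∀ i ∈ S, (f i).ncard ≤ k) :
    (∀ i ∈ S, (f i).ncard = k) ∧
      (∀ i ∈ S, ∀ j ∈ S, i ≠ j → Disjoint (f i) (f j)) := by
  classical
  cases nonempty_fintype I
  cases nonempty_fintype X
  set s : Finset I := S.toFinset with hs
  have hSs : ∀ i, i ∈ s ↔ i ∈ S := by simp [hs]
  have hcov : s.biUnion (fun i => (f i).toFinset) = Finset.univ := by
    apply Finset.eq_univ_of_forall
    intro x
    have : x ∈ ⋃ i ∈ S, f i := by rw [cover]; trivial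
    simp only [Set.mem_iUnion] at this
    obtain ⟨i, hi, hx⟩ := this
    exact Finset.mem_biUnion.mpr ⟨i, (hSs i).mpr hi, by simpa using hx⟩
  have hcards : ∀ i, ((f i).toFinset).card = (f i).ncard := by
    intro i; rw [Set.ncard_eq_toFinset_card']
  have hXcard : (Finset.univ : Finset X).card = k * s.card := by
    rw [Finset.card_univ, ← Nat.card_eq_fintype_card, hcard, Set.ncard_eq_toFinset_card', hs]
  -- the sum of the sizes is at least k * s.card and at most k * s.card
  have hle : k * s.card ≤ ∑ i ∈ s, ((f i).toFinset).card := by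
    calc k * s.card = (Finset.univ : Finset X).card := hXcard.symm
    _ = (s.biUnion (fun i => (f i).toFinset)).card := by rw [hcov]
    _ ≤ ∑ i ∈ s, ((f i).toFinset).card := Finset.card_biUnion_le
  have hge : ∑ i ∈ s, ((f i).toFinset).card ≤ k * s.card := by
    calc ∑ i ∈ s, ((f i).toFinset).card ≤ ∑ _i ∈ s, k :=
          Finset.sum_le_sum (fun i hi => by rw [hcards]; exact hb i ((hSs i).mp hi))
    _ = s.card * k := by rw [Finset.sum_const, smul_eq_mul]
    _ = k * s.card := Nat.mul_comm _ _
  have hsum : ∑ i ∈ s, ((f i).toFinset).card = ∑ _i ∈ s, k := by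
    rw [Finset.sum_const, smul_eq_mul, Nat.mul_comm]
    omega
  have heach : ∀ i ∈ s, ((f i).toFinset).card = k :=
    (Finset.sum_eq_sum_iff_of_le
      (fun i hi => by rw [hcards]; exact hb i ((hSs i).mp hi))).mp hsum
  refine ⟨fun i hi => by rw [← hcards]; exact heach i ((hSs i).mpr hi), ?_⟩
  intro i hi j hj hij
  rw [Set.disjoint_left]
  intro x hxi hxj
  -- build a strictly smaller cover, contradiction
  have hkpos : 0 < k := by
    rcases Nat.eq_zero_or_pos k with rfl | h
    · have := heach i ((hSs i).mpr hi)
      rw [Finset.card_eq_zero, Finset.eq_empty_iff_forall_notMem] at this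
      exact absurd (by simpa using hxi) (this x)
    · exact h
  have hsub : (Finset.univ : Finset X) ⊆
      (s.erase j).biUnion (fun i => (f i).toFinset) ∪ ((f j).toFinset.erase x) := by
    intro y _
    have hy : y ∈ s.biUnion (fun i => (f i).toFinset) := by rw [hcov]; exact Finset.mem_univ y
    obtain ⟨l, hl, hyl⟩ := Finset.mem_biUnion.mp hy
    by_cases hlj : l = j
    · subst hlj
      by_cases hyx : y = x
      · subst hyx
        exact Finset.mem_union_left _ (Finset.mem_biUnion.mpr
          ⟨i, Finset.mem_erase.mpr ⟨hij, (hSs i).mpr hi⟩, by simpa using hxi⟩)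
      · exact Finset.mem_union_right _ (Finset.mem_erase.mpr ⟨hyx, hyl⟩)
    · exact Finset.mem_union_left _ (Finset.mem_biUnion.mpr ⟨l, Finset.mem_erase.mpr ⟨hlj, hl⟩, hyl⟩)
  have hlt : (Finset.univ : Finset X).card < k * s.card := by
    calc (Finset.univ : Finset X).card
        ≤ ((s.erase j).biUnion (fun i => (f i).toFinset) ∪ ((f j).toFinset.erase x)).card :=
          Finset.card_le_card hsub
    _ ≤ ((s.erase j).biUnion (fun i => (f i).toFinset)).card + ((f j).toFinset.erase x).card :=
          Finset.card_union_le _ _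
    _ ≤ (∑ i ∈ s.erase j, ((f i).toFinset).card) + ((f j).toFinset.card - 1) := by
          gcongr
          · exact Finset.card_biUnion_le
          · exact le_of_eq (Finset.card_erase_of_mem (by simpa using hxj))
    _ ≤ (∑ _i ∈ s.erase j, k) + (k - 1) := by
          gcongr with l hl
          · rw [hcards]; exact hb l ((hSs l).mp (Finset.mem_of_mem_erase hl))
          · rw [hcards]; exact hb j hj
    _ = k * (s.card - 1) + (k - 1) := by
          rw [Finset.sum_const, smul_eq_mul, Finset.card_erase_of_mem ((hSs j).mpr hj),
            Nat.mul_comm]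
    _ < k * s.card := by
          have hspos : 0 < s.card := Finset.card_pos.mpr ⟨j, (hSs j).mpr hj⟩
          have : k * s.card = k * (s.card - 1) + k := by
            rw [← Nat.mul_succ]; congr 1; omega
          omega
  rw [hXcard] at hlt
  omega

end Counting
section Struct

variable {γ β : ℕ}

lemma ncard_le_three {E : Type*} (x y z : E) : ({x, y, z} : Set E).ncard ≤ 3 := by
  refine le_trans (Set.ncard_insert_le _ _) (Nat.succ_le_succ ?_)
  refine le_trans (Set.ncard_insert_le _ _) (Nat.succ_le_succ ?_)
  simp [Set.ncard_singleton]

lemma ncard4_ne12 {E : Type*} {e1 e2 e3 e4 : E}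
    (h : ({e1, e2, e3, e4} : Set E).ncard = 4) : e1 ≠ e2 := by
  intro he
  rw [he, Set.insert_idem] at h
  have := ncard_le_three e2 e3 e4
  omega

/-- Structure of a BM relation: each square contributes exactly 4 edges, and
distinct squares contribute disjoint edge sets. -/
lemma BM_struct {U : Set (Set (Tup 1 γ))} (h : IsBM 1 γ U) :
    (∀ q ∈ U, (linkSq q).ncard = 4) ∧
      ∀ q ∈ U, ∀ q' ∈ U, q ≠ q' → Disjoint (linkSq q) (linkSq q') := by
  have hcover : ⋃ q ∈ U, linkSq q = Set.univ := by
    rw [← link_eq_biUnion]; exact h.2.2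
  have hcard : Nat.card (V 1 × V γ) = 4 * U.ncard := by
    rw [h.2.1, Nat.card_eq_fintype_card, Fintype.card_prod, Fintype.card_prod,
      Fintype.card_prod, Fintype.card_fin, Fintype.card_fin, Fintype.card_bool]
    ring
  have hb : ∀ q ∈ U, (linkSq q).ncard ≤ 4 := by
    intro q hq
    obtain ⟨a, b, a', b', rfl⟩ := h.1 q hq
    exact linkSq_ncard_le a a' b b'
  exact crux U linkSq 4 hcover hcard hb

/-- The set of "new" edges. -/
def newE (β : ℕ) : Set (V 1 × V (β + 1)) :=
  {e | isNew e.2}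

@[simp] lemma mem_newE {β : ℕ} {e : V 1 × V (β + 1)} : e ∈ newE β ↔ isNew e.2 := Iff.rfl

lemma newE_eq : newE β =
    {(a1, bn β), (iv a1, bn β), (a1, iv (bn β)), (iv a1, iv (bn β))} := by
  ext e
  rw [mem_newE]
  constructor
  · intro hv
    rcases isNew_cases hv with h2 | h2 <;> rcases V1_cases a1 e.1 with h1 | h1 <;>
      simp [Set.mem_insert_iff, Prod.ext_iff, h1, h2]
  · rintro (rfl | rfl | rfl | rfl) <;> simp

lemma newE_ncard : (newE β).ncard = 4 := by
  rw [newE_eq]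
  rw [Set.ncard_insert_of_notMem (by simp [Prod.ext_iff, iv, a1, bn])
    (Set.toFinite _)]
  rw [Set.ncard_insert_of_notMem (by simp [Prod.ext_iff, iv, a1, bn])
    (Set.toFinite _)]
  rw [Set.ncard_pair (by simp [Prod.ext_iff, iv, a1])]

lemma linkSq_subset_newE {x x' : V 1} {w w' : V (β + 1)} (hw : isNew w) (hw' : isNew w') :
    linkSq (square x w x' w') ⊆ newE β := by
  rw [linkSq_square]
  rintro e (rfl | rfl | rfl | rfl) <;> simpa [newE]

lemma newE_subset {x x' : V 1} {b b' : V β} :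
    newE β ⊆ linkSq (square x (bn β) x' (up b')) ∪
      linkSq (square (iv x) (bn β) (iv x') (up b)) := by
  rcases V1_cases a1 x with rfl | rfl <;> rcases V1_cases a1 x' with rfl | rfl <;>
    · rw [newE_eq, linkSq_square, linkSq_square]
      rintro e (rfl | rfl | rfl | rfl) <;> simp [iv_iv]

end Struct
section Pairs

variable {β : ℕ}

@[simp] lemma ne_iv (x : V n) : x ≠ iv x := (iv_ne x).symm

@[simp] lemma up_inj_iff {b b' : V β} : up b = up b' ↔ b = b' :=
  up_injective.eq_iff

/-- The first replacement pair of ψ_β^{(2)}. -/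
def P1 (a : V 1) (b : V β) (a' : V 1) (b' : V β) : Set (Set (Tup 1 (β + 1))) :=
  {square a (bn β) a' (up b'), square a (up b) a' (iv (bn β))}

/-- The second replacement pair of ψ_β^{(2)}. -/
def P2 (a : V 1) (b : V β) (a' : V 1) (b' : V β) : Set (Set (Tup 1 (β + 1))) :=
  {square a (iv (bn β)) a' (up b'), square a (up b) a' (bn β)}

lemma P2_eq_P1_swap (a a' : V 1) (b b' : V β) : P2 a b a' b' = P1 a' b' a b := by
  rw [P1, P2, square_swap a' a (bn β) (up b), square_swap a' a (up b') (iv (bn β)),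
    Set.pair_comm]

lemma P1_inv (a a' : V 1) (b b' : V β) :
    P1 (iv a) (iv b') (iv a') (iv b) = P1 a b a' b' := by
  rw [P1, P1]
  rw [show square (iv a) (bn β) (iv a') (up (iv b)) = square a (up b) a' (iv (bn β)) by
    rw [square_inv a a' (up b) (iv (bn β))]; simp,
    show square (iv a) (up (iv b')) (iv a') (iv (bn β)) = square a (bn β) a' (up b') by
    rw [square_inv a a' (bn β) (up b')]; simp,
    Set.pair_comm]

lemma P2_inv (a a' : V 1) (b b' : V β) :
    P2 (iv a) (iv b') (iv a') (iv b) = P2 a b a' b' := by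
  rw [P2_eq_P1_swap, P1_inv a' a b' b, ← P2_eq_P1_swap]

lemma orbit {a a' c c' : V 1} {b b' d d' : V β}
    (h : (c, d, c', d') ∈ square a b a' b') :
    (P1 c d c' d' = P1 a b a' b' ∧ P2 c d c' d' = P2 a b a' b') ∨
    (P1 c d c' d' = P2 a b a' b' ∧ P2 c d c' d' = P1 a b a' b') := by
  rcases mem_square_iff.mp h with h | h | h | h <;>
    (simp only [Prod.mk.injEq] at h; obtain ⟨h1, h2, h3, h4⟩ := h; rw [h1, h2, h3, h4])
  · exact Or.inl ⟨rfl, rfl⟩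
  · exact Or.inr ⟨(P2_eq_P1_swap a a' b b').symm, P2_eq_P1_swap a' a b' b⟩
  · exact Or.inl ⟨P1_inv a a' b b', P2_inv a a' b b'⟩
  · exact Or.inr ⟨(P1_inv a' a b' b).trans (P2_eq_P1_swap a a' b b').symm,
      (P2_inv a' a b' b).trans (P2_eq_P1_swap a' a b' b)⟩

lemma hasNew_square_left {x x' : V 1} {w w' : V (β + 1)} (h : isNew w) :
    hasNew (square x w x' w') :=
  ⟨(x, w, x', w'), param_mem _ _ _ _, h⟩

lemma hasNew_square_right {x x' : V 1} {w w' : V (β + 1)} (h : isNew w') :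
    hasNew (square x w x' w') :=
  ⟨(x', w', x, w), by simp [square], h⟩

lemma hasNew_P1 {a a' : V 1} {b b' : V β} : ∀ q ∈ P1 a b a' b', hasNew q := by
  rintro q (rfl | rfl)
  · exact hasNew_square_left isNew_bn
  · exact hasNew_square_right (by simp)

lemma hasNew_P2 {a a' : V 1} {b b' : V β} : ∀ q ∈ P2 a b a' b', hasNew q := by
  rintro q (rfl | rfl)
  · exact hasNew_square_left (by simp)
  · exact hasNew_square_right isNew_bn

/-- The two squares of the first pair are distinct. -/
lemma P1_squares_ne (a a' : V 1) (b b' : V β) :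
    square a (bn β) a' (up b') ≠ square a (up b) a' (iv (bn β)) := by
  intro h
  have hm := h ▸ param_mem a a' (bn β) (up b')
  rw [mem_square_iff] at hm
  simp at hm

/-- The two squares of the second pair are distinct. -/
lemma P2_squares_ne (a a' : V 1) (b b' : V β) :
    square a (iv (bn β)) a' (up b') ≠ square a (up b) a' (bn β) := by
  intro h
  have hm := h ▸ param_mem a a' (iv (bn β)) (up b')
  rw [mem_square_iff] at hm
  simp at hm

/-- Under non-degeneracy, the leading square of `P1` is not in `P2`. -/
lemma P1_notmem_P2 {a a' : V 1} {b b' : V β} (hd : ¬ (a = a' ∧ b = b')) :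
    square a (bn β) a' (up b') ∉ P2 a b a' b' := by
  rintro (h | h) <;> have hm := h ▸ param_mem a a' (bn β) (up b') <;>
    rw [mem_square_iff] at hm <;> simp at hm
  exact hd ⟨hm.1, hm.2.2.symm⟩

end Pairs
section Loops

variable {β : ℕ}

/-- The three squares on the letters a₁, b_{β+1} only. -/
def loops (β : ℕ) : Set (Set (Tup 1 (β + 1))) :=
  {square a1 (bn β) (iv a1) (iv (bn β)),
   square a1 (bn β) a1 (iv (bn β)),
   square a1 (bn β) (iv a1) (bn β)}

lemma psi1_eq (R : Set (Set (Tup 1 β))) :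
    psi1 β R = (fun s => upR R ∪ {s}) '' loops β := rfl

lemma hasNew_loops : ∀ L ∈ loops β, hasNew L := by
  rintro L (rfl | rfl | rfl) <;> exact hasNew_square_left isNew_bn

lemma linkSq_loops : ∀ L ∈ loops β, linkSq L = newE β := by
  rintro L (rfl | rfl | rfl) <;>
    · rw [linkSq_square, newE_eq]
      ext e
      simp [iv_iv]
      tauto

/-- Classification of squares with two new letters whose link has 4 edges. -/
lemma loop_classify {x x' : V 1} {w : V (β + 1)} (hw : isNew w)
    (h4 : (linkSq (square x (bn β) x' w)).ncard = 4) :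
    square x (bn β) x' w ∈ loops β := by
  rcases isNew_cases hw with rfl | rfl
  · -- w = bn : need x' = iv x
    have hne : (iv x, bn β) ≠ (iv x', bn β) := by
      rw [linkSq_square] at h4
      exact ncard4_ne12 h4
    have hxx : x ≠ x' := fun h => hne (by rw [h])
    rcases V1_cases a1 x with rfl | rfl <;> rcases V1_cases a1 x' with rfl | rfl
    · exact absurd rfl hxx
    · right; right; rfl
    · right; right
      exact Set.mem_singleton_iff.mpr (square_swap (iv a1) a1 (bn β) (bn β))
    · exact absurd rfl hxx
  · rcases V1_cases a1 x with rfl | rfl <;> rcases V1_cases a1 x' with rfl | rfl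
    · right; left; rfl
    · left; rfl
    · left
      have := square_inv a1 (iv a1) (bn β) (iv (bn β))
      simp only [iv_iv] at this
      rw [← this]
    · right; left
      have := square_inv a1 a1 (bn β) (iv (bn β))
      simp only [iv_iv] at this
      rw [← this]

end Loops

section LinkHelpers

variable {α β : ℕ}

lemma link_union (A B : Set (Set (Tup α β))) : link (A ∪ B) = link A ∪ link B := by
  ext e
  constructor
  · rintro ⟨q, hq, ht⟩
    rcases hq with hq | hq
    exacts [Or.inl ⟨q, hq, ht⟩, Or.inr ⟨q, hq, ht⟩]
  · rintro (⟨q, hq, ht⟩ | ⟨q, hq, ht⟩)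
    exacts [⟨q, Or.inl hq, ht⟩, ⟨q, Or.inr hq, ht⟩]

lemma link_singleton (q : Set (Tup α β)) : link {q} = linkSq q := by
  ext e
  constructor
  · rintro ⟨q', rfl, ht⟩
    exact ht
  · intro ht
    exact ⟨q, rfl, ht⟩

lemma link_pair (q q' : Set (Tup α β)) : link {q, q'} = linkSq q ∪ linkSq q' := by
  rw [show ({q, q'} : Set (Set (Tup α β))) = {q} ∪ {q'} from rfl, link_union,
    link_singleton, link_singleton]

lemma mem_link_of_mem {R : Set (Set (Tup α β))} {q} (hq : q ∈ R) {e} (he : e ∈ linkSq q) :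
    e ∈ link R := by
  rw [link_eq_biUnion]
  exact Set.mem_biUnion hq he

lemma link_upR (T : Set (Set (Tup α β))) :
    link (upR T) = (fun e : V α × V β => (e.1, up e.2)) '' link T := by
  ext e
  constructor
  · rintro ⟨q, ⟨r, hr, rfl⟩, t, ⟨s, hs, rfl⟩, rfl⟩
    exact ⟨(iv s.1, s.2.1), ⟨r, hr, s, hs, rfl⟩, rfl⟩
  · rintro ⟨e₀, ⟨r, hr, t, ht, rfl⟩, rfl⟩
    exact ⟨upSq r, ⟨r, hr, rfl⟩, upT t, ⟨t, ht, rfl⟩, rfl⟩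

end LinkHelpers

section Branch

variable {β : ℕ} (a a' : V 1) (b b' : V β)

lemma sq_inv_pair1 :
    square (iv a) (bn β) (iv a') (up (iv b)) = square a (up b) a' (iv (bn β)) := by
  rw [square_inv a a' (up b) (iv (bn β))]; simp

lemma newE_subset_branch1 :
    newE β ⊆ linkSq (square a (bn β) a' (up b')) ∪
      linkSq (square a (up b) a' (iv (bn β))) := by
  rw [← sq_inv_pair1 a a' b]
  exact newE_subset

lemma newE_subset_branch2 :
    newE β ⊆ linkSq (square a (iv (bn β)) a' (up b')) ∪
      linkSq (square a (up b) a' (bn β)) := by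
  have h := newE_subset_branch1 a' a b' b
  rw [square_swap a' a (bn β) (up b), square_swap a' a (up b') (iv (bn β)),
    Set.union_comm] at h
  exact h

lemma upLink_subset_branch1 :
    (fun e : V 1 × V β => (e.1, up e.2)) '' linkSq (square a b a' b') ⊆
      linkSq (square a (bn β) a' (up b')) ∪ linkSq (square a (up b) a' (iv (bn β))) := by
  rw [linkSq_square, linkSq_square, linkSq_square]
  rintro e ⟨e₀, (rfl | rfl | rfl | rfl), rfl⟩ <;> simp [iv_iv]

lemma upLink_subset_branch2 :
    (fun e : V 1 × V β => (e.1, up e.2)) '' linkSq (square a b a' b') ⊆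
      linkSq (square a (iv (bn β)) a' (up b')) ∪ linkSq (square a (up b) a' (bn β)) := by
  rw [linkSq_square, linkSq_square, linkSq_square]
  rintro e ⟨e₀, (rfl | rfl | rfl | rfl), rfl⟩ <;> simp [iv_iv]

end Branch
section Forward

variable {β : ℕ}

/-- The squares of an enlarged relation containing the new letter. -/
def newSqs (U : Set (Set (Tup 1 (β + 1)))) : Set (Set (Tup 1 (β + 1))) :=
  {q ∈ U | hasNew q}

lemma newSqs_spec (T : Set (Set (Tup 1 β))) (P : Set (Set (Tup 1 (β + 1))))
    (hP : ∀ q ∈ P, hasNew q) : newSqs (upR T ∪ P) = P := by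
  ext q
  constructor
  · rintro ⟨⟨r, hr, rfl⟩ | hq, hnew⟩
    · exact absurd hnew (not_hasNew_upSq r)
    · exact hq
  · intro hq
    exact ⟨Or.inr hq, hP q hq⟩

lemma ncard_upR (T : Set (Set (Tup 1 β))) : (upR T).ncard = T.ncard :=
  Set.ncard_image_of_injective _ upSq_injective

lemma notmem_upR_of_hasNew {q : Set (Tup 1 (β + 1))} (h : hasNew q)
    (T : Set (Set (Tup 1 β))) : q ∉ upR T := by
  rintro ⟨r, _, rfl⟩
  exact not_hasNew_upSq r h

/-- Replacing one square of a BM relation by a suitable pair gives a BM relation. -/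
lemma BM_of_replace {R : Set (Set (Tup 1 β))} (hR : IsBM 1 β R)
    {a a' : V 1} {b b' : V β} (hs : square a b a' b' ∈ R)
    {p1 p2 : Set (Tup 1 (β + 1))} (hne : p1 ≠ p2)
    (h1new : hasNew p1) (h2new : hasNew p2)
    (hsq1 : ∃ c d c' d', p1 = square c d c' d')
    (hsq2 : ∃ c d c' d', p2 = square c d c' d')
    (hcov : newE β ⊆ linkSq p1 ∪ linkSq p2)
    (hup : (fun e : V 1 × V β => (e.1, up e.2)) '' linkSq (square a b a' b') ⊆
      linkSq p1 ∪ linkSq p2) :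
    IsBM 1 (β + 1) (upR (R \ {square a b a' b'}) ∪ {p1, p2}) := by
  set s := square a b a' b' with hsdef
  have hβpos : 0 < β := by
    have hpos : 0 < R.ncard := (Set.ncard_pos (Set.toFinite _)).mpr ⟨s, hs⟩
    rw [hR.2.1] at hpos; omega
  refine ⟨?_, ?_, ?_⟩
  · rintro q (⟨r, hr, rfl⟩ | (rfl | rfl))
    · obtain ⟨c, d, c', d', rfl⟩ := hR.1 r hr.1
      exact ⟨c, up d, c', up d', upSq_square ..⟩
    · exact hsq1
    · exact hsq2
  · have hstep : upR (R \ {s}) ∪ {p1, p2} = insert p1 (insert p2 (upR (R \ {s}))) := by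
      rw [Set.union_insert, Set.union_singleton]
    rw [hstep, Set.ncard_insert_of_notMem ?h1 (Set.toFinite _),
      Set.ncard_insert_of_notMem (notmem_upR_of_hasNew h2new _) (Set.toFinite _),
      ncard_upR, Set.ncard_diff_singleton_of_mem hs, hR.2.1]
    · omega
    case h1 =>
      rintro (rfl | h)
      · exact hne rfl
      · exact notmem_upR_of_hasNew h1new _ h
  · rw [Set.eq_univ_iff_forall]
    rintro ⟨eh, ev⟩
    rw [link_union, link_pair]
    by_cases hnew : isNew ev
    · rcases hcov (show ((eh, ev) : V 1 × V (β+1)) ∈ newE β from hnew) with h | h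
      exacts [Or.inr (Or.inl h), Or.inr (Or.inr h)]
    · obtain ⟨v, hv⟩ := eq_up_of_not_isNew hnew
      have he' : ((eh, v) : V 1 × V β) ∈ link R := by rw [hR.2.2]; trivial
      rw [link_eq_biUnion] at he'
      obtain ⟨r, hr, her⟩ := Set.mem_iUnion₂.mp he'
      have heq : ((fun e : V 1 × V β => (e.1, up e.2)) (eh, v)) = ((eh, ev) : V 1 × V (β + 1)) :=
        Prod.ext rfl hv.symm
      by_cases hrs : r = s
      · subst hrs
        rcases hup ⟨(eh, v), her, heq⟩ with h | h
        exacts [Or.inr (Or.inl h), Or.inr (Or.inr h)]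
      · left
        rw [link_upR]
        exact ⟨(eh, v), mem_link_of_mem (show r ∈ R \ {s} from ⟨hr, hrs⟩) her, heq⟩

/-- Every element of `psi β R` is a BM relation. -/
lemma psi_BM {R : Set (Set (Tup 1 β))} (hR : IsBM 1 β R) :
    ∀ U ∈ psi β R, IsBM 1 (β + 1) U := by
  rintro U (hU | hU)
  · rw [psi1_eq] at hU
    obtain ⟨L, hL, rfl⟩ := hU
    have hLnew := hasNew_loops L hL
    show IsBM 1 (β + 1) (upR R ∪ {L})
    refine ⟨?_, ?_, ?_⟩
    · rintro q (⟨r, hr, rfl⟩ | rfl)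
      · obtain ⟨c, d, c', d', rfl⟩ := hR.1 r hr
        exact ⟨c, up d, c', up d', upSq_square ..⟩
      · rcases hL with rfl | rfl | rfl
        exacts [⟨_, _, _, _, rfl⟩, ⟨_, _, _, _, rfl⟩, ⟨_, _, _, _, rfl⟩]
    · rw [Set.union_singleton,
        Set.ncard_insert_of_notMem (notmem_upR_of_hasNew hLnew _) (Set.toFinite _),
        ncard_upR, hR.2.1]
      ring
    · rw [Set.eq_univ_iff_forall]
      rintro ⟨eh, ev⟩
      rw [link_union, link_singleton]
      by_cases hnew : isNew ev
      · refine Or.inr ?_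
        rw [linkSq_loops L hL]
        exact hnew
      · obtain ⟨v, hv⟩ := eq_up_of_not_isNew hnew
        refine Or.inl ?_
        rw [link_upR]
        refine ⟨(eh, v), by rw [hR.2.2]; trivial, Prod.ext rfl hv.symm⟩
  · obtain ⟨a, b, a', b', hs, hbr⟩ := hU
    rcases hbr with rfl | rfl
    · exact BM_of_replace hR hs (P1_squares_ne a a' b b')
        (hasNew_square_left isNew_bn) (hasNew_square_right (by simp))
        ⟨_, _, _, _, rfl⟩ ⟨_, _, _, _, rfl⟩
        (newE_subset_branch1 a a' b b') (upLink_subset_branch1 a a' b b')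
    · exact BM_of_replace hR hs (P2_squares_ne a a' b b')
        (hasNew_square_left (by simp)) (hasNew_square_right isNew_bn)
        ⟨_, _, _, _, rfl⟩ ⟨_, _, _, _, rfl⟩
        (newE_subset_branch2 a a' b b') (upLink_subset_branch2 a a' b b')

end Forward
section Uniq

variable {β : ℕ}

lemma pair_eq_cases {X : Type*} {x1 x2 y1 y2 : X} (h : ({x1, x2} : Set X) = {y1, y2})
    (hy : y1 ≠ y2) : (x1 = y1 ∧ x2 = y2) ∨ (x1 = y2 ∧ x2 = y1) := by
  have hx1 : x1 = y1 ∨ x1 = y2 := by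
    have : x1 ∈ ({y1, y2} : Set X) := h ▸ Set.mem_insert x1 {x2}
    simpa using this
  have hy1 : y1 = x1 ∨ y1 = x2 := by
    have : y1 ∈ ({x1, x2} : Set X) := h ▸ Set.mem_insert y1 {y2}
    simpa using this
  have hy2 : y2 = x1 ∨ y2 = x2 := by
    have : y2 ∈ ({x1, x2} : Set X) := h ▸ Set.mem_insert_iff.mpr (Or.inr rfl)
    simpa using this
  rcases hx1 with h1 | h1
  · rcases hy2 with h2 | h2
    · exact absurd (h1.symm.trans h2.symm) hy
    · exact Or.inl ⟨h1, h2.symm⟩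
  · rcases hy1 with h2 | h2
    · exact absurd (h2.trans h1) hy
    · exact Or.inr ⟨h1, h2.symm⟩

lemma merge_unique1 {a a' c c' : V 1} {b b' d d' : V β}
    (h : P1 a b a' b' = P1 c d c' d') : square a b a' b' = square c d c' d' := by
  rcases pair_eq_cases h (P1_squares_ne c c' d d') with ⟨h1, h2⟩ | ⟨h1, h2⟩
  · have hm := mem_of_square_eq h1
    rw [mem_square_iff] at hm
    simp at hm
    obtain ⟨rfl, rfl, rfl⟩ := hm
    have hm2 := mem_of_square_eq h2
    rw [mem_square_iff] at hm2
    simp at hm2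
    obtain rfl := hm2
    rfl
  · have hm := mem_of_square_eq h1
    rw [mem_square_iff] at hm
    simp at hm
    obtain ⟨rfl, rfl, rfl⟩ := hm
    have hm2 := mem_of_square_eq h2
    rw [mem_square_iff] at hm2
    simp at hm2
    obtain rfl := hm2
    exact (square_inv a a' b b').symm ▸ rfl

end Uniq

section Uniq2

variable {β : ℕ}

lemma merge_unique {a a' c c' : V 1} {b b' d d' : V β}
    (h : P1 a b a' b' = P1 c d c' d' ∨ P1 a b a' b' = P2 c d c' d' ∨
      P2 a b a' b' = P1 c d c' d' ∨ P2 a b a' b' = P2 c d c' d') :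
    square a b a' b' = square c d c' d' := by
  rcases h with h | h | h | h
  · exact merge_unique1 h
  · rw [P2_eq_P1_swap] at h
    exact (merge_unique1 h).trans (square_swap c' c d' d)
  · rw [P2_eq_P1_swap] at h
    exact (square_swap a a' b b').trans (merge_unique1 h)
  · rw [P2_eq_P1_swap, P2_eq_P1_swap] at h
    exact (square_swap a a' b b').trans ((merge_unique1 h).trans (square_swap c' c d' d))

lemma nondeg_of_ncard4 {a a' : V 1} {b b' : V β}
    (h4 : (linkSq (square a b a' b')).ncard = 4) : ¬ (a = a' ∧ b = b') := by
  rintro ⟨rfl, rfl⟩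
  rw [linkSq_square] at h4
  exact ncard4_ne12 h4 rfl

lemma oldR_psi2 (R : Set (Set (Tup 1 β))) (s) (a a' : V 1) (b b' : V β) :
    oldR (upR (R \ {s}) ∪ P1 a b a' b') = R \ {s} ∧
    oldR (upR (R \ {s}) ∪ P2 a b a' b') = R \ {s} :=
  ⟨oldR_spec _ _ hasNew_P1, oldR_spec _ _ hasNew_P2⟩

lemma diff_singleton_inj {X : Type*} {R : Set X} {s s' : X} (hs : s ∈ R) (hs' : s' ∈ R)
    (h : R \ {s} = R \ {s'}) : s = s' := by
  by_contra hne
  have : s ∈ R \ {s'} := ⟨hs, fun h' => hne h'⟩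
  rw [← h] at this
  exact this.2 rfl

/-- The refined form of ψ_β^{(2)}. -/
def pairF (R : Set (Set (Tup 1 β))) (s : Set (Tup 1 β)) : Set (Set (Set (Tup 1 (β + 1)))) :=
  {U | ∃ a b a' b', s = square a b a' b' ∧
    (U = upR (R \ {s}) ∪ P1 a b a' b' ∨ U = upR (R \ {s}) ∪ P2 a b a' b')}

lemma psi2_eq_biUnion (R : Set (Set (Tup 1 β))) :
    psi2 β R = ⋃ s ∈ R, pairF R s := by
  ext U
  constructor
  · rintro ⟨a, b, a', b', hs, hbr⟩
    exact Set.mem_biUnion hs ⟨a, b, a', b', rfl, hbr⟩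
  · intro hU
    obtain ⟨s, hs, a, b, a', b', rfl, hbr⟩ := Set.mem_iUnion₂.mp hU
    exact ⟨a, b, a', b', hs, hbr⟩

lemma pairF_eq {R : Set (Set (Tup 1 β))} {s} {a a' : V 1} {b b' : V β}
    (hsp : s = square a b a' b') :
    pairF R s = {upR (R \ {s}) ∪ P1 a b a' b', upR (R \ {s}) ∪ P2 a b a' b'} := by
  ext U
  constructor
  · rintro ⟨c, d, c', d', hsp', hbr⟩
    have hmem : (c, d, c', d') ∈ square a b a' b' := mem_of_square_eq (hsp ▸ hsp')
    rcases orbit hmem with ⟨h1, h2⟩ | ⟨h1, h2⟩ <;> rcases hbr with rfl | rfl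
    · exact Or.inl (by rw [h1])
    · exact Or.inr (by rw [h2]; exact rfl)
    · exact Or.inr (by rw [h1]; exact rfl)
    · exact Or.inl (by rw [h2])
  · rintro (rfl | rfl)
    · exact ⟨a, b, a', b', hsp, Or.inl rfl⟩
    · exact ⟨a, b, a', b', hsp, Or.inr rfl⟩

lemma newSqs_P1 (T : Set (Set (Tup 1 β))) (a a' : V 1) (b b' : V β) :
    newSqs (upR T ∪ P1 a b a' b') = P1 a b a' b' := newSqs_spec _ _ hasNew_P1

lemma newSqs_P2 (T : Set (Set (Tup 1 β))) (a a' : V 1) (b b' : V β) :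
    newSqs (upR T ∪ P2 a b a' b') = P2 a b a' b' := newSqs_spec _ _ hasNew_P2

lemma pairF_ncard {R : Set (Set (Tup 1 β))} (hR : IsBM 1 β R) {s} (hs : s ∈ R) :
    (pairF R s).ncard = 2 := by
  obtain ⟨a, b, a', b', rfl⟩ := hR.1 s hs
  rw [pairF_eq rfl]
  apply Set.ncard_pair
  intro hU
  have h1 := newSqs_P1 (R \ {square a b a' b'}) a a' b b'
  rw [hU, newSqs_P2] at h1
  -- P2 = P1 : contradiction with nondegeneracy
  have hd : ¬ (a = a' ∧ b = b') :=
    nondeg_of_ncard4 ((BM_struct hR).1 _ hs)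
  exact P1_notmem_P2 hd (h1 ▸ Set.mem_insert _ _)

lemma mem_pairF_oldR {R : Set (Set (Tup 1 β))} {s U} (hU : U ∈ pairF R s) :
    oldR U = R \ {s} := by
  obtain ⟨a, b, a', b', _, hbr⟩ := hU
  rcases hbr with rfl | rfl
  exacts [oldR_spec _ _ hasNew_P1, oldR_spec _ _ hasNew_P2]

lemma mem_pairF_newSqs {R : Set (Set (Tup 1 β))} {s U} (hU : U ∈ pairF R s) :
    ∃ a a' b b', s = square a b a' b' ∧
      (newSqs U = P1 a b a' b' ∨ newSqs U = P2 a b a' b') := by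
  obtain ⟨a, b, a', b', hsp, hbr⟩ := hU
  rcases hbr with rfl | rfl
  · exact ⟨a, a', b, b', hsp, Or.inl (newSqs_P1 _ _ _ _ _)⟩
  · exact ⟨a, a', b, b', hsp, Or.inr (newSqs_P2 _ _ _ _ _)⟩

lemma pairF_disjoint {R : Set (Set (Tup 1 β))} {s s'} (hs : s ∈ R) (hs' : s' ∈ R)
    (hne : s ≠ s') : Disjoint (pairF R s) (pairF R s') := by
  rw [Set.disjoint_left]
  intro U hU hU'
  exact hne (diff_singleton_inj hs hs'
    ((mem_pairF_oldR hU).symm.trans (mem_pairF_oldR hU')))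

end Uniq2
section Count2

variable {β : ℕ}

lemma loops_ne12 :
    square a1 (bn β) (iv a1) (iv (bn β)) ≠ square a1 (bn β) a1 (iv (bn β)) := by
  intro h
  have hm := mem_of_square_eq h
  rw [mem_square_iff] at hm
  simp at hm

lemma loops_ne13 :
    square a1 (bn β) (iv a1) (iv (bn β)) ≠ square a1 (bn β) (iv a1) (bn β) := by
  intro h
  have hm := mem_of_square_eq h
  rw [mem_square_iff] at hm
  simp at hm

lemma loops_ne23 :
    square a1 (bn β) a1 (iv (bn β)) ≠ square a1 (bn β) (iv a1) (bn β) := by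
  intro h
  have hm := mem_of_square_eq h
  rw [mem_square_iff] at hm
  simp at hm

lemma loops_ncard : (loops β).ncard = 3 := by
  rw [loops, Set.ncard_insert_of_notMem ?h (Set.toFinite _), Set.ncard_pair loops_ne23]
  case h =>
    rintro (h | h)
    exacts [loops_ne12 h, loops_ne13 h]

lemma newSqs_psi1 (R : Set (Set (Tup 1 β))) {L} (hL : hasNew L) :
    newSqs (upR R ∪ {L}) = {L} :=
  newSqs_spec R {L} (by rintro q rfl; exact hL)

lemma oldR_psi1 (R : Set (Set (Tup 1 β))) {L} (hL : hasNew L) :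
    oldR (upR R ∪ {L}) = R :=
  oldR_spec R {L} (by rintro q rfl; exact hL)

lemma psi1_ncard (R : Set (Set (Tup 1 β))) : (psi1 β R).ncard = 3 := by
  rw [psi1_eq, Set.ncard_image_of_injOn, loops_ncard]
  intro s hs s' hs' h
  have hns := congrArg newSqs h
  simp only at hns
  rw [newSqs_psi1 R (hasNew_loops _ hs), newSqs_psi1 R (hasNew_loops _ hs')] at hns
  exact Set.singleton_eq_singleton_iff.mp hns

lemma singleton_ne_P1 (L : Set (Tup 1 (β + 1))) (a a' : V 1) (b b' : V β) :
    ({L} : Set (Set (Tup 1 (β + 1)))) ≠ P1 a b a' b' := by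
  intro h
  have h1 : square a (bn β) a' (up b') ∈ ({L} : Set (Set (Tup 1 (β + 1)))) :=
    h ▸ Set.mem_insert _ _
  have h2 : square a (up b) a' (iv (bn β)) ∈ ({L} : Set (Set (Tup 1 (β + 1)))) :=
    h ▸ Set.mem_insert_iff.mpr (Or.inr rfl)
  exact P1_squares_ne a a' b b' (h1.trans h2.symm)

lemma singleton_ne_P2 (L : Set (Tup 1 (β + 1))) (a a' : V 1) (b b' : V β) :
    ({L} : Set (Set (Tup 1 (β + 1)))) ≠ P2 a b a' b' := by
  intro h
  have h1 : square a (iv (bn β)) a' (up b') ∈ ({L} : Set (Set (Tup 1 (β + 1)))) :=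
    h ▸ Set.mem_insert _ _
  have h2 : square a (up b) a' (bn β) ∈ ({L} : Set (Set (Tup 1 (β + 1)))) :=
    h ▸ Set.mem_insert_iff.mpr (Or.inr rfl)
  exact P2_squares_ne a a' b b' (h1.trans h2.symm)

lemma psi1_psi2_disjoint (R R' : Set (Set (Tup 1 β))) {U}
    (h1 : U ∈ psi1 β R) (h2 : U ∈ psi2 β R') : False := by
  rw [psi1_eq] at h1
  obtain ⟨L, hL, rfl⟩ := h1
  have hns : newSqs (upR R ∪ {L}) = {L} := newSqs_psi1 R (hasNew_loops _ hL)
  rw [psi2_eq_biUnion] at h2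
  obtain ⟨s, hs, hU⟩ := Set.mem_iUnion₂.mp h2
  obtain ⟨a, a', b, b', _, hP | hP⟩ := mem_pairF_newSqs hU
  · exact singleton_ne_P1 L a a' b b' (hns.symm.trans hP)
  · exact singleton_ne_P2 L a a' b b' (hns.symm.trans hP)

/-- Cardinality of a disjoint union of sets of constant size. -/
lemma ncard_biUnion_const {I X : Type*} [Finite I] [Finite X] (S : Set I) (f : I → Set X)
    (k : ℕ) (hdisj : ∀ i ∈ S, ∀ j ∈ S, i ≠ j → Disjoint (f i) (f j))
    (hcard : ∀ i ∈ S, (f i).ncard = k) :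
    (⋃ i ∈ S, f i).ncard = k * S.ncard := by
  classical
  cases nonempty_fintype I
  cases nonempty_fintype X
  rw [Set.ncard_eq_toFinset_card', Set.ncard_eq_toFinset_card']
  have htf : (⋃ i ∈ S, f i).toFinset = S.toFinset.biUnion (fun i => (f i).toFinset) := by
    ext x
    simp [Set.mem_iUnion]
  have hd : ∀ i ∈ S.toFinset, ∀ j ∈ S.toFinset, i ≠ j →
      Disjoint (f i).toFinset (f j).toFinset := by
    intro i hi j hj hij
    rw [Set.disjoint_toFinset]
    exact hdisj i (by simpa using hi) j (by simpa using hj) hij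
  rw [htf, Finset.card_biUnion hd]
  have hc : ∀ i ∈ S.toFinset, (f i).toFinset.card = k := fun i hi => by
    rw [← Set.ncard_eq_toFinset_card']
    exact hcard i (by simpa using hi)
  rw [Finset.sum_congr rfl hc, Finset.sum_const, smul_eq_mul, Nat.mul_comm]

lemma psi2_ncard {R : Set (Set (Tup 1 β))} (hR : IsBM 1 β R) :
    (psi2 β R).ncard = 2 * β := by
  rw [psi2_eq_biUnion,
    ncard_biUnion_const R (pairF R) 2
      (fun s hs s' hs' hne => pairF_disjoint hs hs' hne)
      (fun s hs => pairF_ncard hR hs), hR.2.1]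
  ring

lemma psi_ncard {R : Set (Set (Tup 1 β))} (hR : IsBM 1 β R) :
    (psi β R).ncard = 2 * β + 3 := by
  rw [psi, Set.ncard_union_eq ?hd (Set.toFinite _) (Set.toFinite _), psi1_ncard,
    psi2_ncard hR]
  · ring
  case hd =>
    rw [Set.disjoint_left]
    intro U hU hU'
    exact psi1_psi2_disjoint R R hU hU'

lemma psi_families_disjoint {R R' : Set (Set (Tup 1 β))} (hne : R ≠ R') :
    Disjoint (psi β R) (psi β R') := by
  rw [Set.disjoint_left]
  rintro U (hU | hU) (hU' | hU')
  · rw [psi1_eq] at hU hU'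
    obtain ⟨L, hL, rfl⟩ := hU
    obtain ⟨L', hL', hEq⟩ := hU'
    apply hne
    have h1 : oldR (upR R ∪ {L}) = R := oldR_psi1 R (hasNew_loops _ hL)
    have h2 : oldR (upR R' ∪ {L'}) = R' := oldR_psi1 R' (hasNew_loops _ hL')
    have hEq' : upR R' ∪ {L'} = upR R ∪ {L} := hEq
    rw [← h1, ← hEq', h2]
  · exact absurd trivial (fun _ => psi1_psi2_disjoint R R' hU hU')
  · exact absurd trivial (fun _ => psi1_psi2_disjoint R' R hU' hU)
  · rw [psi2_eq_biUnion] at hU hU'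
    obtain ⟨s, hs, hUs⟩ := Set.mem_iUnion₂.mp hU
    obtain ⟨s', hs', hUs'⟩ := Set.mem_iUnion₂.mp hU'
    have ho : R \ {s} = R' \ {s'} :=
      (mem_pairF_oldR hUs).symm.trans (mem_pairF_oldR hUs')
    obtain ⟨a, a', b, b', hsp, hP⟩ := mem_pairF_newSqs hUs
    obtain ⟨c, c', d, d', hsp', hP'⟩ := mem_pairF_newSqs hUs'
    have hss : s = s' := by
      rw [hsp, hsp']
      apply merge_unique
      rcases hP with h | h <;> rcases hP' with h' | h'
      exacts [Or.inl (h.symm.trans h'), Or.inr (Or.inl (h.symm.trans h')),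
        Or.inr (Or.inr (Or.inl (h.symm.trans h'))), Or.inr (Or.inr (Or.inr (h.symm.trans h')))]
    apply hne
    subst hss
    rw [show R = insert s (R \ {s}) by
        rw [Set.insert_diff_singleton, Set.insert_eq_of_mem hs],
      ho, Set.insert_diff_singleton, Set.insert_eq_of_mem hs']

end Count2
section Down

variable {β : ℕ}

lemma down_square {q : Set (Tup 1 (β + 1))} (hsq : ∃ a b a' b', q = square a b a' b')
    (hnn : ¬ hasNew q) : ∃ c d c' d', upSq (square c d c' d') = q := by
  obtain ⟨c, w1, c', w2, rfl⟩ := hsq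
  have h1 : ¬ isNew w1 := fun h => hnn ⟨(c, w1, c', w2), param_mem _ _ _ _, h⟩
  have h2 : ¬ isNew w2 := fun h => hnn ⟨(c', w2, c, w1), by simp [square], h⟩
  obtain ⟨d, rfl⟩ := eq_up_of_not_isNew h1
  obtain ⟨d', rfl⟩ := eq_up_of_not_isNew h2
  exact ⟨c, d, c', d', (upSq_square ..)⟩

lemma upR_oldR {W : Set (Set (Tup 1 (β + 1)))} (h : ∀ q ∈ W, ∃ r, upSq r = q) :
    upR (oldR W) = W := by
  ext q
  constructor
  · rintro ⟨r, hr, rfl⟩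
    exact hr
  · intro hq
    obtain ⟨r, rfl⟩ := h q hq
    exact ⟨r, hq, rfl⟩

lemma oldR_squares {W : Set (Set (Tup 1 (β + 1)))}
    (hsq : ∀ q ∈ W, ∃ a b a' b', q = square a b a' b') (hnn : ∀ q ∈ W, ¬ hasNew q) :
    ∀ r ∈ oldR W, ∃ c d c' d', r = square c d c' d' := by
  intro r hr
  obtain ⟨c, d, c', d', hup⟩ := down_square (hsq _ hr) (hnn _ hr)
  exact ⟨c, d, c', d', (upSq_injective hup).symm⟩

lemma downLink_branch1 {a a' : V 1} {b b' : V β} {e : V 1 × V (β + 1)}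
    (hnotnew : ¬ isNew e.2)
    (he : e ∈ linkSq (square a (bn β) a' (up b')) ∪
      linkSq (square a (up b) a' (iv (bn β)))) :
    ∃ e₀ ∈ linkSq (square a b a' b'), ((e₀.1, up e₀.2) : V 1 × V (β + 1)) = e := by
  rw [linkSq_square, linkSq_square] at he
  rw [linkSq_square]
  rcases he with (rfl | rfl | rfl | rfl) | (rfl | rfl | rfl | rfl)
  · exact absurd isNew_bn hnotnew
  · exact ⟨(iv a', b'), by simp, rfl⟩
  · exact ⟨(a, iv b'), by simp, rfl⟩
  · exact absurd (by simp : isNew (iv (bn β))) hnotnew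
  · exact ⟨(iv a, b), by simp, rfl⟩
  · exact absurd (by simp : isNew (iv (bn β))) hnotnew
  · exact absurd (by simpa using isNew_bn) hnotnew
  · exact ⟨(a', iv b), by simp, rfl⟩

end Down

section Surj

variable {β : ℕ}

lemma norm_of_mem_linkSq {γ : ℕ} {q : Set (Tup 1 γ)}
    (hsq : ∃ a b a' b', q = square a b a' b') {h : V 1} {v : V γ}
    (he : (h, v) ∈ linkSq q) : ∃ x' w, q = square (iv h) v x' w := by
  obtain ⟨a, b, a', b', rfl⟩ := hsq
  rw [linkSq_square] at he
  simp only [Set.mem_insert_iff, Set.mem_singleton_iff] at he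
  rcases he with he | he | he | he <;> simp only [Prod.mk.injEq] at he
  · exact ⟨a', b', by rw [he.1, he.2, iv_iv]⟩
  · exact ⟨a, b, by rw [he.1, he.2, iv_iv, ← square_swap]⟩
  · exact ⟨iv a', iv b, by rw [he.1, he.2]; exact square_inv a a' b b'⟩
  · refine ⟨iv a, iv b', ?_⟩
    rw [he.1, he.2]
    exact (square_swap a a' b b').trans (square_inv a' a b' b)

lemma psi_surj {U : Set (Set (Tup 1 (β + 1)))} (hU : IsBM 1 (β + 1) U) :
    ∃ R, IsBM 1 β R ∧ U ∈ psi β R := by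
  obtain ⟨h4, hdisj⟩ := BM_struct hU
  have he0 : ((a1, bn β) : V 1 × V (β + 1)) ∈ link U := by rw [hU.2.2]; trivial
  rw [link_eq_biUnion] at he0
  obtain ⟨q0, hq0U, he0⟩ := Set.mem_iUnion₂.mp he0
  obtain ⟨x', w, hq0⟩ := norm_of_mem_linkSq (hU.1 q0 hq0U) he0
  by_cases hw : isNew w
  · -- loop case
    have hq0l : q0 ∈ loops β := by
      rw [hq0]
      exact loop_classify hw (by rw [← hq0]; exact h4 q0 hq0U)
    have hlq0 : linkSq q0 = newE β := linkSq_loops q0 hq0l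
    have hold : ∀ q ∈ U, q ≠ q0 → ¬ hasNew q := by
      rintro q hq hne ⟨t, ht, htnew⟩
      have hedge : (iv t.1, t.2.1) ∈ linkSq q := ⟨t, ht, rfl⟩
      have hin : (iv t.1, t.2.1) ∈ linkSq q0 := by rw [hlq0]; exact htnew
      exact Set.disjoint_left.mp (hdisj q hq q0 hq0U hne) hedge hin
    have hupold : upR (oldR (U \ {q0})) = U \ {q0} := by
      apply upR_oldR
      intro q hq
      obtain ⟨c, d, c', d', hup⟩ := down_square (hU.1 q hq.1) (hold q hq.1 hq.2)
      exact ⟨_, hup⟩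
    refine ⟨oldR (U \ {q0}), ⟨?_, ?_, ?_⟩, Or.inl ?_⟩
    · exact oldR_squares (fun q hq => hU.1 q hq.1) (fun q hq => hold q hq.1 hq.2)
    · have h1 : (upR (oldR (U \ {q0}))).ncard = (U \ {q0}).ncard := by rw [hupold]
      rw [ncard_upR] at h1
      rw [h1, Set.ncard_diff_singleton_of_mem hq0U, hU.2.1]
      omega
    · rw [Set.eq_univ_iff_forall]
      rintro ⟨eh, ev⟩
      have hmem : ((eh, up ev) : V 1 × V (β + 1)) ∈ link U := by rw [hU.2.2]; trivial
      rw [link_eq_biUnion] at hmem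
      obtain ⟨q, hq, he⟩ := Set.mem_iUnion₂.mp hmem
      have hqne : q ≠ q0 := by
        rintro rfl
        rw [hlq0] at he
        exact not_isNew_up ev he
      have hqmem : q ∈ upR (oldR (U \ {q0})) := by rw [hupold]; exact ⟨hq, hqne⟩
      obtain ⟨r, hrR, rfl⟩ := hqmem
      rw [linkSq_upSq] at he
      obtain ⟨e₀, he₀, heq⟩ := he
      have h1 : e₀.1 = eh := congrArg Prod.fst heq
      have h2 : up e₀.2 = up ev := congrArg Prod.snd heq
      have h2' : e₀.2 = ev := up_injective h2
      have : ((eh, ev) : V 1 × V β) = e₀ := by rw [← h1, ← h2']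
      rw [this]
      exact mem_link_of_mem hrR he₀
    · rw [psi1_eq]
      refine ⟨q0, hq0l, ?_⟩
      show upR (oldR (U \ {q0})) ∪ {q0} = U
      rw [hupold, Set.diff_union_of_subset (by simpa using hq0U)]
  · -- pairing case
    obtain ⟨b', rfl⟩ := eq_up_of_not_isNew hw
    have he2 : ((iv a1, bn β) : V 1 × V (β + 1)) ∈ link U := by rw [hU.2.2]; trivial
    rw [link_eq_biUnion] at he2
    obtain ⟨q2, hq2U, he2⟩ := Set.mem_iUnion₂.mp he2
    have hq2ne : q2 ≠ q0 := by
      rintro rfl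
      rw [hq0, linkSq_square] at he2
      simp only [Set.mem_insert_iff, Set.mem_singleton_iff] at he2
      rcases he2 with h | h | h | h <;> (simp only [Prod.mk.injEq] at h; simp [iv_iv] at h)
    obtain ⟨y', w2, hq2⟩ := norm_of_mem_linkSq (hU.1 q2 hq2U) he2
    simp only [iv_iv] at hq2
    have hw2 : ¬ isNew w2 := by
      intro hnew
      have hsub : linkSq q2 ⊆ newE β := by
        rw [hq2]; exact linkSq_subset_newE isNew_bn hnew
      have heq : linkSq q2 = newE β :=
        Set.eq_of_subset_of_ncard_le hsub (by rw [h4 q2 hq2U, newE_ncard]) (Set.toFinite _)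
      have hin : ((a1, bn β) : V 1 × V (β + 1)) ∈ linkSq q2 := by
        rw [heq]; exact isNew_bn
      exact Set.disjoint_left.mp (hdisj q2 hq2U q0 hq0U hq2ne) hin he0
    obtain ⟨b0, rfl⟩ := eq_up_of_not_isNew hw2
    have hy' : y' = iv x' := by
      rcases V1_cases x' y' with h | h
      · exfalso
        have hedge2 : ((x', iv (bn β)) : V 1 × V (β + 1)) ∈ linkSq q2 := by
          rw [hq2, linkSq_square, h]
          right; right; right; rfl
        have hedge0 : ((x', iv (bn β)) : V 1 × V (β + 1)) ∈ linkSq q0 := by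
          rw [hq0, linkSq_square]
          right; right; right; rfl
        exact Set.disjoint_left.mp (hdisj q2 hq2U q0 hq0U hq2ne) hedge2 hedge0
      · exact h
    subst hy'
    -- rewrite q2 into replacement form
    have hq2p : q2 = square (iv a1) (up (iv b0)) x' (iv (bn β)) := by
      have h := sq_inv_pair1 (iv a1) x' (iv b0)
      simp only [iv_iv] at h
      exact hq2.trans h
    set s : Set (Tup 1 β) := square (iv a1) (iv b0) x' b' with hsdef
    have hcov2 : newE β ⊆ linkSq q0 ∪ linkSq q2 := by
      rw [hq0, hq2p]
      exact newE_subset_branch1 (iv a1) x' (iv b0) b'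
    have hq2new : hasNew q2 := by rw [hq2]; exact hasNew_square_left isNew_bn
    have hold : ∀ q ∈ U, q ≠ q0 → q ≠ q2 → ¬ hasNew q := by
      rintro q hq hne0 hne2 ⟨t, ht, htnew⟩
      have hedge : (iv t.1, t.2.1) ∈ linkSq q := ⟨t, ht, rfl⟩
      rcases hcov2 (show (iv t.1, t.2.1) ∈ newE β from htnew) with h | h
      · exact Set.disjoint_left.mp (hdisj q hq q0 hq0U hne0) hedge h
      · exact Set.disjoint_left.mp (hdisj q hq q2 hq2U hne2) hedge h
    have hupold : upR (oldR (U \ {q0, q2})) = U \ {q0, q2} := by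
      apply upR_oldR
      intro q hq
      have hq' : q ∈ U ∧ q ≠ q0 ∧ q ≠ q2 := by
        refine ⟨hq.1, ?_, ?_⟩ <;> intro h <;> exact hq.2 (by simp [h])
      obtain ⟨c, d, c', d', hup⟩ := down_square (hU.1 q hq'.1) (hold q hq'.1 hq'.2.1 hq'.2.2)
      exact ⟨_, hup⟩
    have hsnot : s ∉ oldR (U \ {q0, q2}) := by
      intro hmem
      have hupne : upSq s ≠ q2 := fun h => not_hasNew_upSq s (h ▸ hq2new)
      have hedge : ((iv (iv a1), up (iv b0)) : V 1 × V (β + 1)) ∈ linkSq (upSq s) := by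
        rw [hsdef, upSq_square, linkSq_square]
        left; rfl
      have hedge2 : ((iv (iv a1), up (iv b0)) : V 1 × V (β + 1)) ∈ linkSq q2 := by
        rw [hq2p, linkSq_square]
        left; rfl
      exact Set.disjoint_left.mp (hdisj (upSq s) hmem.1 q2 hq2U hupne) hedge hedge2
    have hUdiff : (U \ {q0, q2}).ncard = β - 1 := by
      have hpair : ({q0, q2} : Set (Set (Tup 1 (β + 1)))) = {q0} ∪ {q2} := rfl
      rw [hpair, ← Set.diff_diff,
        Set.ncard_diff_singleton_of_mem (show q2 ∈ U \ {q0} from ⟨hq2U, hq2ne⟩),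
        Set.ncard_diff_singleton_of_mem hq0U, hU.2.1]
      omega
    have hβpos : 1 ≤ β := by
      by_contra hc
      push_neg at hc
      interval_cases β
      · -- β = 0 : but then b' : V 0 is impossible
        exact absurd b'.1.2 (by omega)
    refine ⟨insert s (oldR (U \ {q0, q2})), ⟨?_, ?_, ?_⟩, Or.inr ?_⟩
    · rintro r (rfl | hr)
      · exact ⟨_, _, _, _, hsdef⟩
      · exact oldR_squares (fun q hq => hU.1 q hq.1)
          (fun q hq => hold q hq.1
            (fun h => hq.2 (by simp [h])) (fun h => hq.2 (by simp [h]))) r hr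
    · rw [Set.ncard_insert_of_notMem hsnot (Set.toFinite _)]
      have h1 : (oldR (U \ {q0, q2})).ncard = (U \ {q0, q2}).ncard := by
        rw [← ncard_upR, hupold]
      rw [h1, hUdiff]
      omega
    · rw [Set.eq_univ_iff_forall]
      rintro ⟨eh, ev⟩
      have hmem : ((eh, up ev) : V 1 × V (β + 1)) ∈ link U := by rw [hU.2.2]; trivial
      rw [link_eq_biUnion] at hmem
      obtain ⟨q, hq, he⟩ := Set.mem_iUnion₂.mp hmem
      have hdown : ((eh, up ev) : V 1 × V (β + 1)) ∈ linkSq q0 ∪ linkSq q2 →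
          ((eh, ev) : V 1 × V β) ∈ linkSq s := by
        intro hin
        rw [hq0, hq2p] at hin
        obtain ⟨e₀, he₀, heq⟩ := downLink_branch1 (e := ((eh, up ev) : V 1 × V (β + 1)))
          (not_isNew_up ev) hin
        have h1 : e₀.1 = eh := congrArg Prod.fst heq
        have h2 : e₀.2 = ev := up_injective (congrArg Prod.snd heq)
        have : ((eh, ev) : V 1 × V β) = e₀ := by rw [← h1, ← h2]
        rw [this, hsdef]
        exact he₀
      by_cases hq0q : q = q0
      · subst hq0q
        exact mem_link_of_mem (Set.mem_insert _ _) (hdown (Or.inl he))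
      by_cases hq2q : q = q2
      · subst hq2q
        exact mem_link_of_mem (Set.mem_insert _ _) (hdown (Or.inr he))
      · have hqmem : q ∈ upR (oldR (U \ {q0, q2})) := by
          rw [hupold]
          exact ⟨hq, by rintro (rfl | rfl) <;> [exact hq0q rfl; exact hq2q rfl]⟩
        obtain ⟨r, hrR, rfl⟩ := hqmem
        rw [linkSq_upSq] at he
        obtain ⟨e₀, he₀, heq⟩ := he
        have h1 : e₀.1 = eh := congrArg Prod.fst heq
        have h2 : e₀.2 = ev := up_injective (congrArg Prod.snd heq)
        have : ((eh, ev) : V 1 × V β) = e₀ := by rw [← h1, ← h2]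
        rw [this]
        exact mem_link_of_mem (Set.mem_insert_of_mem _ hrR) he₀
    · refine ⟨iv a1, iv b0, x', b', Set.mem_insert _ _, Or.inl ?_⟩
      rw [show insert s (oldR (U \ {q0, q2})) \ {s} = oldR (U \ {q0, q2}) from
        Set.insert_diff_self_of_notMem hsnot]
      rw [hupold]
      rw [show ({square (iv a1) (bn β) x' (up b'), square (iv a1) (up (iv b0)) x' (iv (bn β))} :
          Set (Set (Tup 1 (β + 1)))) = {q0, q2} by rw [← hq0, ← hq2p]]
      exact (Set.diff_union_of_subset (by
        rintro p (rfl | rfl) <;> [exact hq0U; exact hq2U])).symm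

end Surj
/-- The recursion |R_{1,β+1}| = (2β+3)·|R_{1,β}|. -/
theorem card_recursion (β : ℕ) (hβ : 1 ≤ β) :
    {U : Set (Set (Tup 1 (β + 1))) | IsBM 1 (β + 1) U}.ncard =
      (2 * β + 3) * {R : Set (Set (Tup 1 β)) | IsBM 1 β R}.ncard := by
  have hset : {U : Set (Set (Tup 1 (β + 1))) | IsBM 1 (β + 1) U} =
      ⋃ R ∈ {R : Set (Set (Tup 1 β)) | IsBM 1 β R}, psi β R := by
    ext U
    constructor
    · intro hU
      obtain ⟨R, hR, hmem⟩ := psi_surj hU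
      exact Set.mem_biUnion hR hmem
    · intro hU
      obtain ⟨R, hR, hmem⟩ := Set.mem_iUnion₂.mp hU
      exact psi_BM hR U hmem
  rw [hset]
  exact ncard_biUnion_const {R : Set (Set (Tup 1 β)) | IsBM 1 β R} (psi β) (2 * β + 3)
    (fun R _ R' _ hne => psi_families_disjoint hne)
    (fun R hR => psi_ncard hR)
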